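/- Let G be a DAG in which A and C are adjacent, C and B are adjacent, but A and B are non-adjacent. Then A and B are d-connected given every subset of Pa(A)\{B} containing C and every subset of Pa(B)\{A} containing C if and only if A → C ← B (i.e., C is a child of both A and B). -/

import Mathlib

variable {V : Type*}

/-- `x` and `y` are adjacent in the directed graph with edge relation `E`. -/
def GraphAdj (E : V → V → Prop) (x y : V) : Prop := E x y ∨ E y x

/-- The set of parents of `x`. -/
def Parents (E : V → V → Prop) (x : V) : Set V := {p | E p x}

/-- The edge relation `E` is acyclic (no directed cycles, including self-loops). -/
def IsAcyclicRel (E : V → V → Prop) : Prop := ∀ v, ¬ Relation.TransGen E v v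

/-- `A` and `B` are d-connected given `Z`: there is a path (a finite sequence of
distinct vertices joined by edges in either direction) from `A` to `B` such that
every collider on the path is in `Z` or has a descendant in `Z`, and no
non-collider on the path is in `Z`. -/
def DConnected (E : V → V → Prop) (Z : Set V) (A B : V) : Prop :=
  ∃ (n : ℕ) (p : ℕ → V), 0 < n ∧ p 0 = A ∧ p n = B ∧
    (∀ i j, i ≤ n → j ≤ n → p i = p j → i = j) ∧
    (∀ i < n, E (p i) (p (i + 1)) ∨ E (p (i + 1)) (p i)) ∧
    (∀ i, 0 < i → i < n →
      ((E (p (i - 1)) (p i) ∧ E (p (i + 1)) (p i)) →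
        ∃ d, Relation.ReflTransGen E (p i) d ∧ d ∈ Z) ∧
      (¬(E (p (i - 1)) (p i) ∧ E (p (i + 1)) (p i)) → p i ∉ Z))

/-- `A` and `B` are d-separated given `Z`. -/
def DSeparated (E : V → V → Prop) (Z : Set V) (A B : V) : Prop :=
  ¬ DConnected E Z A B

/-!
If `A → C ← B`, the path `A → C ← B` d-connects `A` and `B` given any set containing the collider
`C`. Conversely, one of `A`, `B` (say `A`) is not an ancestor of the other, and then `Pa(A)`
d-separates them: a d-connecting path would have to leave `A` forwards, and it can never turn
back, since its first collider would be a descendant of `A` with a descendant in `Pa(A)`. So if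
`C` were a parent of `A`, the set `Pa(A) \ {B} = Pa(A)`, which contains `C`, would separate `A`
and `B`; hence `A → C`, and acyclicity forces `B → C`.
-/

section DSeparation

variable {E : V → V → Prop}

theorem GraphAdj.symm {x y : V} (h : GraphAdj E x y) : GraphAdj E y x :=
  Or.symm h

theorem IsAcyclicRel.ne_of_rel (hacy : IsAcyclicRel E) {x y : V} (h : E x y) : x ≠ y := by
  rintro rfl
  exact hacy x (.single h)

theorem DConnected.symm {Z : Set V} {A B : V} (h : DConnected E Z A B) :
    DConnected E Z B A := by
  obtain ⟨n, p, hn, rfl, rfl, hinj, hedge, hcol⟩ := h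
  refine ⟨n, fun i => p (n - i), hn, by simp, by simp, ?_, ?_, ?_⟩
  · intro i j hi hj hij
    have := hinj (n - i) (n - j) (by omega) (by omega) hij
    omega
  · intro i hi
    have h := hedge (n - (i + 1)) (by omega)
    rw [show n - (i + 1) + 1 = n - i by omega] at h
    exact h.symm
  · intro i hi0 hin
    have h := hcol (n - i) (by omega) (by omega)
    rw [show n - i - 1 = n - (i + 1) by omega, show n - i + 1 = n - (i - 1) by omega] at h
    exact ⟨fun hc => h.1 hc.symm, fun hc => h.2 fun hc' => hc hc'.symm⟩

theorem dConnected_of_collider (hacy : IsAcyclicRel E) {Z : Set V} {A B C : V}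
    (hAC : E A C) (hBC : E B C) (hAB : A ≠ B) (hC : C ∈ Z) : DConnected E Z A B := by
  have hCA := (hacy.ne_of_rel hAC).symm
  have hCB := (hacy.ne_of_rel hBC).symm
  refine ⟨2, fun i => if i = 0 then A else if i = 1 then C else B, two_pos, rfl, rfl,
    ?_, ?_, ?_⟩
  · intro i j hi hj hij
    interval_cases i <;> interval_cases j <;> simp_all
  · intro i hi
    interval_cases i
    · exact .inl hAC
    · exact .inr hBC
  · intro i hi0 hi2
    obtain rfl : i = 1 := by omega
    exact ⟨fun _ => ⟨C, .refl, hC⟩, fun hnc => (hnc ⟨hAC, hBC⟩).elim⟩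

theorem dSeparated_parents_of_not_transGen (hacy : IsAcyclicRel E) {A B : V}
    (hAB : ¬ GraphAdj E A B) (hanc : ¬ Relation.TransGen E A B) :
    DSeparated E (Parents E A) A B := by
  rintro ⟨n, p, hn, rfl, rfl, -, hedge, hcol⟩
  obtain rfl | h2n : n = 1 ∨ 2 ≤ n := by omega
  · exact hAB (hedge 0 hn)
  have hfirst : E (p 0) (p 1) := by
    by_contra hfwd
    -- otherwise `p 1` is a parent of `A`, so it would have to be a collider, i.e. `A → p 1`
    have hback := (hedge 0 hn).resolve_left hfwd
    exact (hcol 1 one_pos h2n).2 (fun hcoll => hfwd hcoll.1) hback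
  have hforward : ∀ i, 1 ≤ i → i ≤ n →
      Relation.TransGen E (p 0) (p i) ∧ E (p (i - 1)) (p i) := by
    intro i hi
    induction i, hi using Nat.le_induction with
    | base => exact fun _ => ⟨.single hfirst, hfirst⟩
    | succ m hm ih =>
      intro hmn
      obtain ⟨hAm, hprev⟩ := ih (by omega)
      rcases hedge m (by omega) with hfwd | hback
      · exact ⟨hAm.tail hfwd, hfwd⟩
      · obtain ⟨d, hmd, hdA⟩ := (hcol m hm (by omega)).1 ⟨hprev, hback⟩
        exact (hacy (p 0) ((hAm.trans_left hmd).tail hdA)).elim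
  exact hanc (hforward n (by omega) le_rfl).1

theorem rel_of_forall_dConnected_parents (hacy : IsAcyclicRel E) {A B C : V}
    (hAB : ¬ GraphAdj E A B) (hanc : ¬ Relation.TransGen E A B) (hAC : GraphAdj E A C)
    (h : ∀ Z : Set V, Z ⊆ Parents E A \ {B} → C ∈ Z → DConnected E Z A B) : E A C := by
  refine hAC.resolve_right fun hCA => ?_
  have hBA : B ∉ Parents E A := fun hBA => hAB (.inr hBA)
  have hconn := h _ subset_rfl ⟨hCA, fun hCB => hBA (hCB ▸ hCA)⟩
  rw [Set.sdiff_singleton_eq_self hBA] at hconn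
  exact dSeparated_parents_of_not_transGen hacy hAB hanc hconn

end DSeparation

theorem dconnected_parent_subsets_containing_iff_collider_general
    (E : V → V → Prop) (hacy : IsAcyclicRel E) (A B C : V)
    (hAC : GraphAdj E A C) (hCB : GraphAdj E C B) (hAB : ¬ GraphAdj E A B)
    (hABne : A ≠ B) :
    ((∀ Z : Set V, Z ⊆ Parents E A \ {B} → C ∈ Z → DConnected E Z A B) ∧
     (∀ Z : Set V, Z ⊆ Parents E B \ {A} → C ∈ Z → DConnected E Z A B)) ↔
      (E A C ∧ E B C) := by
  constructor
  · rintro ⟨hA, hB⟩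
    by_cases hanc : Relation.TransGen E A B
    · have hBC : E B C := rel_of_forall_dConnected_parents hacy (mt GraphAdj.symm hAB)
        (fun hBA => hacy A (hanc.trans hBA)) hCB.symm fun Z hZ hC => (hB Z hZ hC).symm
      exact ⟨hAC.resolve_right fun hCA => hacy A ((hanc.tail hBC).tail hCA), hBC⟩
    · have hAC' : E A C := rel_of_forall_dConnected_parents hacy hAB hanc hAC hA
      exact ⟨hAC', hCB.resolve_left fun hCB' => hanc (.head hAC' (.single hCB'))⟩
  · rintro ⟨hAC', hBC⟩
    exact ⟨fun Z _ hC => dConnected_of_collider hacy hAC' hBC hABne hC,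
      fun Z _ hC => dConnected_of_collider hacy hAC' hBC hABne hC⟩

/-- For adjacent pairs `A,C` and `C,B` with `A,B` non-adjacent: `A` and `B` are
d-connected given every subset of `Pa(A)\{B}` containing `C` and every subset of
`Pa(B)\{A}` containing `C` iff `A → C ← B`. -/
theorem dconnected_parent_subsets_containing_iff_collider [Finite V]
    (E : V → V → Prop) (hacy : IsAcyclicRel E) (A B C : V)
    (hAC : GraphAdj E A C) (hCB : GraphAdj E C B) (hAB : ¬ GraphAdj E A B)
    (hABne : A ≠ B) :
    ((∀ Z : Set V, Z ⊆ Parents E A \ {B} → C ∈ Z → DConnected E Z A B) ∧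
     (∀ Z : Set V, Z ⊆ Parents E B \ {A} → C ∈ Z → DConnected E Z A B)) ↔
      (E A C ∧ E B C) :=
  dconnected_parent_subsets_containing_iff_collider_general E hacy A B C hAC hCB hAB hABne
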